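/- arXiv:2510.07245 — 3 statements merged into one kernel-verified Lean document; each statement's English description precedes it below -/
import Mathlib

section
/- Let 𝒯 be a teacher class over (X,Y,Φ) and let H be a nonempty history consistent with 𝒯. Then there exists a deterministic DFF algorithm 𝒜 such that M(𝒜,𝒯,H) ≤ DFFdim(𝒯,H). -/
open scoped Classical

/-- A teacher over examples `X`, labels `Y` and Boolean features `Φ`:
a labeling function together with a feature-feedback function that, whenever
two examples receive different labels, returns a feature of `Φ` satisfied by
the first example and not by the second. -/
structure Teacher (X Y : Type) (Φ : Set (X → Bool)) where
  label : X → Y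
  feedback : X → X → Option (X → Bool)
  feedback_spec : ∀ x xh : X, label x ≠ label xh →
    ∃ φ ∈ Φ, feedback x xh = some φ ∧ φ x = true ∧ φ xh = false

/-- A teacher is consistent with a history `H` of labeled examples. -/
def ConsistentH {X Y : Type} {Φ : Set (X → Bool)} (T : Teacher X Y Φ)
    (H : Set (X × Y)) : Prop :=
  ∀ p ∈ H, T.label p.1 = p.2

/-- Restriction of a teacher class by one round of DFF interaction: the
teachers that label `x` with `y` and give feature feedback `φ` on `(x, xh)`. -/
def TRestrict {X Y : Type} {Φ : Set (X → Bool)} (𝒯 : Set (Teacher X Y Φ))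
    (x xh : X) (y : Y) (φ : X → Bool) : Set (Teacher X Y Φ) :=
  {T | T ∈ 𝒯 ∧ T.label x = y ∧ T.feedback x xh = some φ}

/-- `ShatteredDFFT Φ 𝒯 H d` holds iff there is a DFF tree of height `d`
shattered by the teacher class `𝒯` and the history `H`: at a leaf, some
teacher of the current class is consistent with the accumulated history
(i.e. every root-to-leaf path of the tree is consistent with some teacher of
the original class that is consistent with the original history); at an inner
node a next example `x` is presented, and for every available explanation
pair `(xh, yh)` (an element of the history or a labeled example revealed
along the path, all of which are accumulated in `H`) there is teacher
feedback `(y, φ)` with `y ≠ yh` and `φ ∈ Φ` leading to a shattered subtree of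
height `d` for the correspondingly restricted class and extended history. -/
inductive ShatteredDFFT {X Y : Type} (Φ : Set (X → Bool)) :
    Set (Teacher X Y Φ) → Set (X × Y) → ℕ → Prop
  | leaf (𝒯 : Set (Teacher X Y Φ)) (H : Set (X × Y))
      (h : ∃ T ∈ 𝒯, ConsistentH T H) : ShatteredDFFT Φ 𝒯 H 0
  | node (𝒯 : Set (Teacher X Y Φ)) (H : Set (X × Y)) (d : ℕ) (x : X)
      (y : X × Y → Y) (φ : X × Y → (X → Bool))
      (hne : ∀ p ∈ H, y p ≠ p.2) (hΦ : ∀ p ∈ H, φ p ∈ Φ)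
      (h : ∀ p ∈ H,
        ShatteredDFFT Φ (TRestrict 𝒯 x p.1 (y p) (φ p)) (insert (x, y p) H) d) :
      ShatteredDFFT Φ 𝒯 H (d + 1)

/-- The DFF dimension of a teacher class `𝒯` with history `H`: the maximal
height of a DFF tree shattered by `𝒯` and `H` (possibly infinite). -/
noncomputable def DFFdim {X Y : Type} (Φ : Set (X → Bool))
    (𝒯 : Set (Teacher X Y Φ)) (H : Set (X × Y)) : ℕ∞ :=
  sSup {d : ℕ∞ | ∃ n : ℕ, d = n ∧ ShatteredDFFT Φ 𝒯 H n}
/-- A transcript of DFF interaction: each entry records the presented example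
`x`, the explanation `xh` and prediction `yh` output by the learner, and, on a
mistake round, the teacher feedback `(y, φ)` (`none` on correct rounds). -/
abbrev DFFTranscript (X Y : Type) : Type :=
  List (X × X × Y × Option (Y × Option (X → Bool)))

/-- A deterministic DFF algorithm: given the transcript so far and the next
example, output an explanation example together with a predicted label. -/
abbrev DFFAlg (X Y : Type) : Type := DFFTranscript X Y → X → X × Y

/-- The labeled examples revealed by a transcript: on a correct round the
predicted label is revealed to be correct; on a mistake round the teacher
reveals the correct label. -/
def revealed {X Y : Type} (tr : DFFTranscript X Y) : Set (X × Y) :=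
  {p | ∃ e ∈ tr, e.1 = p.1 ∧
    ((e.2.2.2 = none ∧ e.2.2.1 = p.2) ∨ ∃ φ, e.2.2.2 = some (p.2, φ))}

/-- One round of the realizable DFF protocol between algorithm `A` and
teacher `T`: present `x`, let the algorithm predict, and append the teacher's
feedback on a mistake. -/
noncomputable def dffStep {X Y : Type} {Φ : Set (X → Bool)} (A : DFFAlg X Y)
    (T : Teacher X Y Φ) (tr : DFFTranscript X Y) (x : X) : DFFTranscript X Y :=
  if (A tr x).2 = T.label x then tr ++ [(x, (A tr x).1, (A tr x).2, none)]
  else tr ++ [(x, (A tr x).1, (A tr x).2, some (T.label x, T.feedback x (A tr x).1))]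

/-- The transcript produced by running algorithm `A` against teacher `T` on a
finite sequence of examples. -/
noncomputable def dffRun {X Y : Type} {Φ : Set (X → Bool)} (A : DFFAlg X Y)
    (T : Teacher X Y Φ) (xs : List X) : DFFTranscript X Y :=
  xs.foldl (dffStep A T) []

/-- The number of mistake rounds in a transcript. -/
def dffMistakes {X Y : Type} (tr : DFFTranscript X Y) : ℕ :=
  tr.countP fun e => e.2.2.2.isSome

/-- A DFF algorithm is legal for `(𝒯, H)` if, on any transcript reachable by
interacting with a teacher of `𝒯` consistent with `H`, the explanation and
prediction it outputs form a pair of `H` or a previously revealed labeled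
example. -/
def LegalAlg {X Y : Type} {Φ : Set (X → Bool)} (A : DFFAlg X Y)
    (𝒯 : Set (Teacher X Y Φ)) (H : Set (X × Y)) : Prop :=
  ∀ T ∈ 𝒯, ConsistentH T H → ∀ (xs : List X) (x : X),
    A (dffRun A T xs) x ∈ H ∪ revealed (dffRun A T xs)

/-- The worst-case number of mistakes of algorithm `A` over all finite example
sequences and all teachers of `𝒯` consistent with `H` (possibly infinite). -/
noncomputable def MBound {X Y : Type} {Φ : Set (X → Bool)} (A : DFFAlg X Y)
    (𝒯 : Set (Teacher X Y Φ)) (H : Set (X × Y)) : ℕ∞ :=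
  sSup {m : ℕ∞ | ∃ T ∈ 𝒯, ConsistentH T H ∧
    ∃ xs : List X, m = (dffMistakes (dffRun A T xs) : ℕ∞)}

/-! The learner keeps the teachers of `𝒯` that agree with every feature feedback received so
far, together with `H` extended by every revealed label. When this pair has finite DFF dimension
`d`, some available explanation pair `p` has the property that every feedback a consistent teacher
could give after a wrong prediction `p.2` drops the dimension below `d`: otherwise, choosing for
each explanation a feedback that keeps dimension `d` assembles a shattered tree of height `d + 1`.
Predicting with such a pair, every mistake lowers the dimension, and correct rounds only enlarge
the history, which cannot raise it; hence mistakes plus current dimension never exceed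
`DFFdim Φ 𝒯 H`. -/

section Shattering

variable {X Y : Type} {Φ : Set (X → Bool)} {𝒯 𝒯' : Set (Teacher X Y Φ)} {H H' : Set (X × Y)}
  {n m : ℕ}

namespace ShatteredDFFT

theorem mono (h : ShatteredDFFT Φ 𝒯 H n) (h𝒯 : 𝒯 ⊆ 𝒯') (hH : H' ⊆ H) :
    ShatteredDFFT Φ 𝒯' H' n := by
  induction h generalizing 𝒯' H' with
  | leaf 𝒯 H hcons =>
    obtain ⟨T, hT, hTH⟩ := hcons
    exact leaf _ _ ⟨T, h𝒯 hT, fun p hp => hTH p (hH hp)⟩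
  | node 𝒯 H d x y φ hne hΦ _ ih =>
    exact node _ _ _ x y φ (fun p hp => hne p (hH hp)) (fun p hp => hΦ p (hH hp))
      fun p hp => ih p (hH hp) (fun T hT => ⟨h𝒯 hT.1, hT.2⟩) (Set.insert_subset_insert hH)

theorem of_succ (hH : H.Nonempty) (h : ShatteredDFFT Φ 𝒯 H (n + 1)) :
    ShatteredDFFT Φ 𝒯 H n := by
  obtain ⟨p, hp⟩ := hH
  cases h with
  | node _ _ _ _ _ _ _ _ hsub => exact (hsub p hp).mono (fun T hT => hT.1) (Set.subset_insert _ _)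

theorem of_le (hH : H.Nonempty) (h : ShatteredDFFT Φ 𝒯 H n) (hmn : m ≤ n) :
    ShatteredDFFT Φ 𝒯 H m := by
  induction n, hmn using Nat.le_induction with
  | base => exact h
  | succ n _ ih => exact ih (h.of_succ hH)

theorem le_DFFdim (h : ShatteredDFFT Φ 𝒯 H n) : (n : ℕ∞) ≤ DFFdim Φ 𝒯 H :=
  le_sSup ⟨n, rfl, h⟩

end ShatteredDFFT

theorem DFFdim_le {c : ℕ∞} (h : ∀ n : ℕ, ShatteredDFFT Φ 𝒯 H n → (n : ℕ∞) ≤ c) :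
    DFFdim Φ 𝒯 H ≤ c :=
  sSup_le <| by rintro _ ⟨n, rfl, hn⟩; exact h n hn

theorem DFFdim_mono_s1 (h𝒯 : 𝒯 ⊆ 𝒯') (hH : H' ⊆ H) : DFFdim Φ 𝒯 H ≤ DFFdim Φ 𝒯' H' :=
  DFFdim_le fun _ hn => (hn.mono h𝒯 hH).le_DFFdim

theorem DFFdim_lt_of_not_shatteredDFFT (hH : H.Nonempty) (h₀ : ShatteredDFFT Φ 𝒯 H 0)
    (hn : ¬ ShatteredDFFT Φ 𝒯 H n) : DFFdim Φ 𝒯 H < n := by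
  have hlt : ∀ m, ShatteredDFFT Φ 𝒯 H m → m < n := fun m hm => by
    by_contra! hnm
    exact hn (hm.of_le hH hnm)
  have hpos := hlt 0 h₀
  calc DFFdim Φ 𝒯 H ≤ (n - 1 : ℕ) := DFFdim_le fun m hm => by
        have := hlt m hm
        exact_mod_cast (by omega : m ≤ n - 1)
    _ < n := by exact_mod_cast (by omega : n - 1 < n)

theorem exists_explanation_not_shatteredDFFT (hH : H.Nonempty)
    (hn : ¬ ShatteredDFFT Φ 𝒯 H (n + 1)) (x : X) :
    ∃ p ∈ H, ∀ y φ, y ≠ p.2 → φ ∈ Φ →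
      ¬ ShatteredDFFT Φ (TRestrict 𝒯 x p.1 y φ) (insert (x, y) H) n := by
  by_contra! h
  have : Nonempty Y := ⟨hH.some.2⟩
  choose! y φ hy hφ hsub using h
  exact hn (.node 𝒯 H n x y φ hy hφ hsub)

def ReducesDFFdim (𝒯 : Set (Teacher X Y Φ)) (H : Set (X × Y)) (x : X) (p : X × Y) : Prop :=
  ∀ y φ, y ≠ p.2 → φ ∈ Φ → (∃ T ∈ TRestrict 𝒯 x p.1 y φ, ConsistentH T (insert (x, y) H)) →
    DFFdim Φ (TRestrict 𝒯 x p.1 y φ) (insert (x, y) H) < DFFdim Φ 𝒯 H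

theorem exists_reducesDFFdim (hH : H.Nonempty) (hdim : DFFdim Φ 𝒯 H ≠ ⊤) (x : X) :
    ∃ p ∈ H, ReducesDFFdim 𝒯 H x p := by
  obtain ⟨n, hn⟩ := ENat.ne_top_iff_exists.mp hdim
  have hnot : ¬ ShatteredDFFT Φ 𝒯 H (n + 1) := fun h => by
    have := h.le_DFFdim
    rw [← hn] at this
    norm_cast at this
    omega
  obtain ⟨p, hp, hsub⟩ := exists_explanation_not_shatteredDFFT hH hnot x
  refine ⟨p, hp, fun y φ hy hφ hT => ?_⟩
  rw [← hn]
  exact DFFdim_lt_of_not_shatteredDFFT (Set.insert_nonempty _ _) (.leaf _ _ hT) (hsub y φ hy hφ)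

end Shattering

section Protocol

variable {X Y : Type} {Φ : Set (X → Bool)} {𝒯 : Set (Teacher X Y Φ)} {A : DFFAlg X Y}
  {T : Teacher X Y Φ} {tr : DFFTranscript X Y} {x : X}

def restrictEntry (𝒯 : Set (Teacher X Y Φ)) :
    X × X × Y × Option (Y × Option (X → Bool)) → Set (Teacher X Y Φ)
  | (x, xh, _, some (y, some φ)) => TRestrict 𝒯 x xh y φ
  | _ => 𝒯

def restrictTranscript (𝒯 : Set (Teacher X Y Φ)) (tr : DFFTranscript X Y) :
    Set (Teacher X Y Φ) :=
  tr.foldl restrictEntry 𝒯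

@[simp]
theorem restrictEntry_none (xh : X) (yh : Y) : restrictEntry 𝒯 (x, xh, yh, none) = 𝒯 :=
  rfl

@[simp]
theorem restrictEntry_some_some (xh : X) (yh y : Y) (φ : X → Bool) :
    restrictEntry 𝒯 (x, xh, yh, some (y, some φ)) = TRestrict 𝒯 x xh y φ :=
  rfl

theorem restrictTranscript_append_singleton (e : X × X × Y × Option (Y × Option (X → Bool))) :
    restrictTranscript 𝒯 (tr ++ [e]) = restrictEntry (restrictTranscript 𝒯 tr) e := by
  simp [restrictTranscript]

theorem dffMistakes_append_none (xh : X) (yh : Y) :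
    dffMistakes (tr ++ [(x, xh, yh, none)]) = dffMistakes tr := by
  simp [dffMistakes]

theorem dffMistakes_append_some (xh : X) (yh : Y) (f : Y × Option (X → Bool)) :
    dffMistakes (tr ++ [(x, xh, yh, some f)]) = dffMistakes tr + 1 := by
  simp [dffMistakes]

theorem consistentH_insert_label {S : Set (X × Y)} (hS : ConsistentH T S) :
    ConsistentH T (insert (x, T.label x) S) := by
  rintro p (rfl | hp)
  exacts [rfl, hS p hp]

theorem dffStep_of_eq (h : (A tr x).2 = T.label x) :
    dffStep A T tr x = tr ++ [(x, (A tr x).1, (A tr x).2, none)] :=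
  if_pos h

theorem dffStep_of_ne (h : (A tr x).2 ≠ T.label x) :
    dffStep A T tr x =
      tr ++ [(x, (A tr x).1, (A tr x).2, some (T.label x, T.feedback x (A tr x).1))] :=
  if_neg h

theorem revealed_append_singleton (e : X × X × Y × Option (Y × Option (X → Bool))) :
    revealed (tr ++ [e]) = revealed tr ∪ revealed [e] := by
  ext p
  simp [revealed, or_and_right, exists_or]

theorem revealed_singleton_none (xh : X) (yh : Y) :
    revealed [(x, xh, yh, none)] = {(x, yh)} := by
  ext p
  simp [revealed, Prod.ext_iff, eq_comm]

theorem revealed_singleton_some (xh : X) (yh y : Y) (o : Option (X → Bool)) :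
    revealed [(x, xh, yh, some (y, o))] = {(x, y)} := by
  ext p
  simp [revealed, Prod.ext_iff, eq_comm]

theorem revealed_dffStep : revealed (dffStep A T tr x) = insert (x, T.label x) (revealed tr) := by
  unfold dffStep
  split_ifs with h
  · rw [revealed_append_singleton, revealed_singleton_none, h, Set.union_singleton]
  · rw [revealed_append_singleton, revealed_singleton_some, Set.union_singleton]

theorem dffRun_append_singleton (xs : List X) :
    dffRun A T (xs ++ [x]) = dffStep A T (dffRun A T xs) x :=
  List.foldl_append ..

theorem consistentH_revealed_dffRun (xs : List X) : ConsistentH T (revealed (dffRun A T xs)) := by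
  induction xs using List.reverseRecOn with
  | nil => simp [ConsistentH, dffRun, revealed]
  | append_singleton xs x ih =>
    rw [dffRun_append_singleton, revealed_dffStep]
    exact consistentH_insert_label ih

theorem mem_restrictTranscript_dffRun (hT : T ∈ 𝒯) (xs : List X) :
    T ∈ restrictTranscript 𝒯 (dffRun A T xs) := by
  induction xs using List.reverseRecOn with
  | nil => exact hT
  | append_singleton xs x ih =>
    rw [dffRun_append_singleton, dffStep]
    split_ifs
    · rwa [restrictTranscript_append_singleton]
    · rw [restrictTranscript_append_singleton]
      cases hfb : T.feedback x (A (dffRun A T xs) x).1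
      exacts [ih, ⟨ih, rfl, hfb⟩]

noncomputable def dffPotential (𝒯 : Set (Teacher X Y Φ)) (H : Set (X × Y))
    (tr : DFFTranscript X Y) : ℕ∞ :=
  dffMistakes tr + DFFdim Φ (restrictTranscript 𝒯 tr) (H ∪ revealed tr)

end Protocol

section SOA

variable {X Y : Type} {Φ : Set (X → Bool)} {𝒯 : Set (Teacher X Y Φ)} {H : Set (X × Y)}
  {p₀ : X × Y} {T : Teacher X Y Φ} {tr : DFFTranscript X Y}

/-- The explanation `p₀` is a fallback, used only when the current DFF dimension is infinite. -/
noncomputable def soaDFF (𝒯 : Set (Teacher X Y Φ)) (H : Set (X × Y)) (p₀ : X × Y) :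
    DFFAlg X Y := fun tr x =>
  if h : ∃ p ∈ H ∪ revealed tr, ReducesDFFdim (restrictTranscript 𝒯 tr) (H ∪ revealed tr) x p
  then h.choose else p₀

theorem soaDFF_mem (hp₀ : p₀ ∈ H) (tr : DFFTranscript X Y) (x : X) :
    soaDFF 𝒯 H p₀ tr x ∈ H ∪ revealed tr := by
  unfold soaDFF
  split_ifs with h
  exacts [h.choose_spec.1, Or.inl hp₀]

theorem dffPotential_dffStep_soaDFF_le (hH : H.Nonempty) (hT : T ∈ restrictTranscript 𝒯 tr)
    (hcons : ConsistentH T (H ∪ revealed tr)) (x : X) :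
    dffPotential 𝒯 H (dffStep (soaDFF 𝒯 H p₀) T tr x) ≤ dffPotential 𝒯 H tr := by
  set A := soaDFF 𝒯 H p₀
  unfold dffPotential
  rw [revealed_dffStep, Set.union_insert]
  by_cases hcorrect : (A tr x).2 = T.label x
  · rw [dffStep_of_eq hcorrect, restrictTranscript_append_singleton, restrictEntry_none,
      dffMistakes_append_none]
    exact add_le_add_right (DFFdim_mono_s1 subset_rfl (Set.subset_insert _ _)) _
  by_cases htop : DFFdim Φ (restrictTranscript 𝒯 tr) (H ∪ revealed tr) = ⊤
  · rw [htop, add_top]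
    exact le_top
  have hex := exists_reducesDFFdim (hH.mono Set.subset_union_left) htop x
  obtain ⟨hmem, hred⟩ : A tr x ∈ H ∪ revealed tr ∧
      ReducesDFFdim (restrictTranscript 𝒯 tr) (H ∪ revealed tr) x (A tr x) := by
    simp only [A, soaDFF, dif_pos hex]
    exact hex.choose_spec
  obtain ⟨φ, hφ, hfb, -, -⟩ :=
    T.feedback_spec x _ ((hcons _ hmem).trans_ne hcorrect).symm
  have hlt := hred _ φ (Ne.symm hcorrect) hφ ⟨T, ⟨hT, rfl, hfb⟩, consistentH_insert_label hcons⟩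
  rw [dffStep_of_ne hcorrect, hfb, restrictTranscript_append_singleton, restrictEntry_some_some,
    dffMistakes_append_some, Nat.cast_succ, add_assoc, add_comm (1 : ℕ∞)]
  exact add_le_add_right (Order.add_one_le_of_lt hlt) _

theorem dffPotential_dffRun_soaDFF_le (hH : H.Nonempty) (hT : T ∈ 𝒯) (hcons : ConsistentH T H)
    (xs : List X) : dffPotential 𝒯 H (dffRun (soaDFF 𝒯 H p₀) T xs) ≤ DFFdim Φ 𝒯 H := by
  induction xs using List.reverseRecOn with
  | nil => simp [dffPotential, dffRun, dffMistakes, restrictTranscript, revealed]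
  | append_singleton xs x ih =>
    rw [dffRun_append_singleton]
    refine (dffPotential_dffStep_soaDFF_le hH (mem_restrictTranscript_dffRun hT xs) ?_ x).trans ih
    exact fun p hp => hp.elim (hcons p) (consistentH_revealed_dffRun xs p)

end SOA

theorem exists_dff_alg_mistakes_le_DFFdim_general {X Y : Type}
    (Φ : Set (X → Bool)) (𝒯 : Set (Teacher X Y Φ)) (H : Set (X × Y))
    (hH : H.Nonempty) :
    ∃ A : DFFAlg X Y, LegalAlg A 𝒯 H ∧ MBound A 𝒯 H ≤ DFFdim Φ 𝒯 H := by
  obtain ⟨p₀, hp₀⟩ := hH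
  refine ⟨soaDFF 𝒯 H p₀, fun _ _ _ _ _ => soaDFF_mem hp₀ _ _, sSup_le ?_⟩
  rintro _ ⟨T, hT, hcons, xs, rfl⟩
  exact le_self_add.trans (dffPotential_dffRun_soaDFF_le ⟨p₀, hp₀⟩ hT hcons xs)

/-- **Lemma (upper bound, SOA-DFF).** Let `𝒯` be a teacher class over
`(X, Y, Φ)` (with `Y` a finite label set) and let `H` be a nonempty history
consistent with `𝒯`.  Then there exists a deterministic DFF algorithm `𝒜`
(legal for `(𝒯, H)`) with `M(𝒜, 𝒯, H) ≤ DFFdim(𝒯, H)`. -/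
theorem exists_dff_alg_mistakes_le_DFFdim {X Y : Type} [Finite Y]
    (Φ : Set (X → Bool)) (𝒯 : Set (Teacher X Y Φ)) (H : Set (X × Y))
    (hH : H.Nonempty) (hcons : ∃ T ∈ 𝒯, ConsistentH T H) :
    ∃ A : DFFAlg X Y, LegalAlg A 𝒯 H ∧ MBound A 𝒯 H ≤ DFFdim Φ 𝒯 H :=
  exists_dff_alg_mistakes_le_DFFdim_general Φ 𝒯 H hH
end

section
/- Let 𝒯_1 ⊆ 𝒯_2 be teacher classes over (X,Y,Φ) and let H_2 ⊆ H_1 be nonempty histories such that H_1 is consistent with 𝒯_1. Then DFFdim(𝒯_1,H_1) ≤ DFFdim(𝒯_2,H_2). -/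
open scoped Classical

theorem ShatteredDFFT.mono_s3 {X Y : Type} {Φ : Set (X → Bool)} {𝒯₁ 𝒯₂ : Set (Teacher X Y Φ)}
    {H₁ H₂ : Set (X × Y)} {n : ℕ} (h : ShatteredDFFT Φ 𝒯₁ H₁ n) (h𝒯 : 𝒯₁ ⊆ 𝒯₂)
    (hH : H₂ ⊆ H₁) : ShatteredDFFT Φ 𝒯₂ H₂ n := by
  induction h generalizing 𝒯₂ H₂ with
  | leaf _ _ hcons =>
    obtain ⟨T, hT, hTH⟩ := hcons
    exact .leaf _ _ ⟨T, h𝒯 hT, fun p hp => hTH p (hH hp)⟩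
  | node _ _ d x y φ hne hΦ _ ih =>
    exact .node _ _ d x y φ (fun p hp => hne p (hH hp)) (fun p hp => hΦ p (hH hp))
      fun p hp => ih p (hH hp) (fun _ hT => ⟨h𝒯 hT.1, hT.2⟩) (Set.insert_subset_insert hH)

theorem DFFdim_mono_general {X Y : Type} (Φ : Set (X → Bool))
    (𝒯₁ 𝒯₂ : Set (Teacher X Y Φ)) (H₁ H₂ : Set (X × Y))
    (h𝒯 : 𝒯₁ ⊆ 𝒯₂) (hH : H₂ ⊆ H₁) :
    DFFdim Φ 𝒯₁ H₁ ≤ DFFdim Φ 𝒯₂ H₂ :=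
  sSup_le_sSup fun _ ⟨n, hd, hs⟩ => ⟨n, hd, hs.mono_s3 h𝒯 hH⟩

/-- **Lemma (monotonicity of the DFF dimension).** If `𝒯₁ ⊆ 𝒯₂` are teacher
classes over `(X, Y, Φ)` (with `Y` a finite label set) and `H₂ ⊆ H₁` are
nonempty histories such that `H₁` is consistent with `𝒯₁`, then
`DFFdim(𝒯₁, H₁) ≤ DFFdim(𝒯₂, H₂)`. -/
theorem DFFdim_mono {X Y : Type} [Finite Y] (Φ : Set (X → Bool))
    (𝒯₁ 𝒯₂ : Set (Teacher X Y Φ)) (H₁ H₂ : Set (X × Y))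
    (h𝒯 : 𝒯₁ ⊆ 𝒯₂) (hH : H₂ ⊆ H₁) (hH₂ : H₂.Nonempty)
    (hcons : ∃ T ∈ 𝒯₁, ConsistentH T H₁) :
    DFFdim Φ 𝒯₁ H₁ ≤ DFFdim Φ 𝒯₂ H₂ :=
  DFFdim_mono_general Φ 𝒯₁ 𝒯₂ H₁ H₂ h𝒯 hH
end

section
/- Let 𝒯 be a teacher class over (X,Y,Φ), let H be a nonempty history consistent with 𝒯, and let N be the number of labels in Y that do not appear in any pair of H. Then Ldim(DtO(𝒯,H)) ≥ DFFdim(𝒯,H) − N. -/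
/-!
Follow a shattered DFF tree downwards, keeping as Littlestone class the labelings (restricted
to the examples outside `H`) of the teachers still consistent with the path. The example `x` of
an inner node is new, because a shattered path never gives one example two labels. If two
explanations get different answers at `x`, their subtrees form a binary Littlestone split at `x`.
Otherwise every explanation gets the same answer `y`; as `y` differs from the label of each pair
of the history, `y` is a label the history has not used yet, and following that branch uses up
one of the `N` missing labels. So at most `N` levels of the DFF tree are lost.
-/

open scoped Classical

/-- The indicator feature of a single element. -/
noncomputable def indF {Z : Type} (w : Z) : Z → Bool :=
  fun z => decide (z = w)

/-- The feature set of the mapping `OtD`: all singleton indicator features on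
`X ⊕ Y` (the example domain `X` enlarged by a fresh example `⋆_y = inr y`
for every label `y`). -/
noncomputable def OtDPhi (X Y : Type) : Set ((X ⊕ Y) → Bool) :=
  {φ | ∃ w : X ⊕ Y, φ = indF w}

/-- The history of the mapping `OtD`: each fresh example `⋆_y` labeled `y`. -/
def OtDHist (X Y : Type) : Set ((X ⊕ Y) × Y) :=
  {p | ∃ y : Y, p = (Sum.inr y, y)}

/-- The teacher class of the mapping `OtD` applied to a hypothesis class `F`:
for `f ∈ F`, the teacher labels by the extension of `f` sending `⋆_y` to `y`,
and its feature feedback on `(x, x')` is the indicator of `x`. -/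
noncomputable def OtDClass {X Y : Type} (F : Set (X → Y)) :
    Set (Teacher (X ⊕ Y) Y (OtDPhi X Y)) :=
  {T | ∃ f ∈ F, T.label = Sum.elim f id ∧
    T.feedback = fun x _ => some (indF x)}

/-- The examples appearing in a history. -/
def HistX {X Y : Type} (H : Set (X × Y)) : Set X := {x | ∃ y : Y, (x, y) ∈ H}

/-- The mapping `DtO` from DFF to Online Learning: the class of restrictions
of the labeling functions of `𝒯` to the examples not appearing in `H`. -/
def DtO {X Y : Type} {Φ : Set (X → Bool)} (𝒯 : Set (Teacher X Y Φ))
    (H : Set (X × Y)) : Set ((((HistX H)ᶜ : Set X)) → Y) :=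
  {g | ∃ T ∈ 𝒯, g = fun x => T.label x.1}

/-- `LShat F n` holds iff there is a Littlestone tree of height `n` shattered
by the hypothesis class `F`: a complete binary tree with examples at internal
nodes, two distinct labels on the outgoing edges of each internal node, and
every root-to-leaf path realized by some hypothesis of `F`. -/
inductive LShat {X Y : Type} : Set (X → Y) → ℕ → Prop
  | leaf (F : Set (X → Y)) (h : F.Nonempty) : LShat F 0
  | node (F : Set (X → Y)) (n : ℕ) (x : X) (y₁ y₂ : Y) (hne : y₁ ≠ y₂)
      (h₁ : LShat {f ∈ F | f x = y₁} n) (h₂ : LShat {f ∈ F | f x = y₂} n) :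
      LShat F (n + 1)

/-- The (multiclass) Littlestone dimension of a hypothesis class: the maximal
height of a Littlestone tree for it (possibly infinite). -/
noncomputable def Ldim {X Y : Type} (F : Set (X → Y)) : ℕ∞ :=
  sSup {d : ℕ∞ | ∃ n : ℕ, d = n ∧ LShat F n}

/-- `F` admits an infinite-depth Littlestone tree: a binary branching
assignment of examples and pairs of distinct labels to finite binary
sequences such that every finite branch is consistent with some hypothesis
of `F`. -/
def InfLTree {X Y : Type} (F : Set (X → Y)) : Prop :=
  ∃ (x : List Bool → X) (y : List Bool → Bool → Y),
    (∀ s : List Bool, y s false ≠ y s true) ∧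
    ∀ b : List Bool, ∃ f ∈ F,
      ∀ (s : List Bool) (c : Bool), (s ++ [c]) <+: b → f (x s) = y s c


namespace ShatteredDFFT

variable {X Y : Type} {Φ : Set (X → Bool)}

theorem exists_consistent {𝒯 : Set (Teacher X Y Φ)} {H : Set (X × Y)} {d : ℕ}
    (h : ShatteredDFFT Φ 𝒯 H d) (hH : H.Nonempty) : ∃ T ∈ 𝒯, ConsistentH T H := by
  induction h with
  | leaf _ _ h => exact h
  | node _ _ _ _ _ _ _ _ _ ih =>
    obtain ⟨p, hp⟩ := hH
    obtain ⟨T, ⟨hT, -⟩, hTH⟩ := ih p hp (Set.insert_nonempty _ _)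
    exact ⟨T, hT, fun q hq => hTH q (Set.mem_insert_of_mem _ hq)⟩

theorem label_unique {𝒯 : Set (Teacher X Y Φ)} {H : Set (X × Y)} {d : ℕ}
    (h : ShatteredDFFT Φ 𝒯 H d) {x : X} {y₁ y₂ : Y} (h₁ : (x, y₁) ∈ H)
    (h₂ : (x, y₂) ∈ H) : y₁ = y₂ := by
  obtain ⟨T, -, hTH⟩ := h.exists_consistent ⟨_, h₁⟩
  exact (hTH _ h₁).symm.trans (hTH _ h₂)

end ShatteredDFFT

namespace LShat

variable {X Y : Type}

theorem nonempty {F : Set (X → Y)} {n : ℕ} (h : LShat F n) : F.Nonempty := by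
  induction h with
  | leaf _ h => exact h
  | node _ _ _ _ _ _ _ _ ih _ => exact ih.mono (Set.sep_subset _ _)

theorem mono {F G : Set (X → Y)} {n : ℕ} (h : LShat F n) (hFG : F ⊆ G) : LShat G n := by
  induction h generalizing G with
  | leaf _ h => exact .leaf _ (h.mono hFG)
  | node _ n x y₁ y₂ hne _ _ ih₁ ih₂ =>
    exact .node _ n x y₁ y₂ hne (ih₁ fun _ hf => ⟨hFG hf.1, hf.2⟩)
      (ih₂ fun _ hf => ⟨hFG hf.1, hf.2⟩)

theorem of_le {F : Set (X → Y)} {n m : ℕ} (h : LShat F n) (hmn : m ≤ n) : LShat F m := by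
  induction h generalizing m with
  | leaf F h => exact Nat.le_zero.mp hmn ▸ .leaf F h
  | node F n x y₁ y₂ hne h₁ h₂ ih₁ ih₂ =>
    cases m with
    | zero => exact .leaf F (h₁.nonempty.mono (Set.sep_subset _ _))
    | succ m => exact .node F m x y₁ y₂ hne (ih₁ (by omega)) (ih₂ (by omega))

theorem le_Ldim {F : Set (X → Y)} {n : ℕ} (h : LShat F n) : (n : ℕ∞) ≤ Ldim F :=
  le_sSup ⟨n, rfl, h⟩

end LShat

section MissingLabels

variable {X Y : Type} [Fintype Y]

noncomputable def missingLabels (H : Set (X × Y)) : Finset Y :=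
  Finset.univ.filter fun y : Y => ∀ x : X, (x, y) ∉ H

theorem mem_missingLabels {H : Set (X × Y)} {y : Y} :
    y ∈ missingLabels H ↔ ∀ x : X, (x, y) ∉ H := by
  simp [missingLabels]

theorem missingLabels_anti {H₁ H₂ : Set (X × Y)} (h : H₁ ⊆ H₂) :
    missingLabels H₂ ⊆ missingLabels H₁ := fun _ hy =>
  mem_missingLabels.2 fun x hx => mem_missingLabels.1 hy x (h hx)

theorem card_missingLabels_insert_lt {H : Set (X × Y)} {y : Y}
    (hy : y ∈ missingLabels H) (x : X) :
    (missingLabels (insert (x, y) H)).card < (missingLabels H).card := by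
  refine Finset.card_lt_card ((Finset.ssubset_iff_of_subset
    (missingLabels_anti (Set.subset_insert _ _))).2 ⟨y, hy, ?_⟩)
  exact fun hy' => mem_missingLabels.1 hy' x (Set.mem_insert _ _)

end MissingLabels

theorem DtO_TRestrict_subset {X Y : Type} {Φ : Set (X → Bool)} (𝒯 : Set (Teacher X Y Φ))
    (H : Set (X × Y)) {x : X} (hx : x ∉ HistX H) (xh : X) (y : Y) (φ : X → Bool) :
    DtO (TRestrict 𝒯 x xh y φ) H ⊆ {f ∈ DtO 𝒯 H | f ⟨x, hx⟩ = y} := by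
  rintro _ ⟨T, ⟨hT, hTx, -⟩, rfl⟩
  exact ⟨⟨T, hT, rfl⟩, hTx⟩

theorem ShatteredDFFT.lShat_DtO {X Y : Type} [Fintype Y] {Φ : Set (X → Bool)}
    {H : Set (X × Y)} (hH : H.Nonempty) {𝒯 : Set (Teacher X Y Φ)} {H' : Set (X × Y)} {d : ℕ}
    (h : ShatteredDFFT Φ 𝒯 H' d) (hHH' : H ⊆ H') :
    LShat (DtO 𝒯 H) (d - (missingLabels H').card) := by
  induction h with
  | leaf _ _ h =>
    obtain ⟨T, hT, -⟩ := h
    rw [Nat.zero_sub]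
    exact .leaf _ ⟨fun x => T.label x.1, T, hT, rfl⟩
  | node 𝒯 H' d x y _ hne _ h ih =>
    have hxH' : x ∉ HistX H' := fun ⟨yh, hyh⟩ =>
      hne _ hyh ((h _ hyh).label_unique (Set.mem_insert _ _) (Set.mem_insert_of_mem _ hyh))
    have hxH : x ∉ HistX H := fun ⟨yh, hyh⟩ => hxH' ⟨yh, hHH' hyh⟩
    have branch : ∀ p ∈ H', LShat {f ∈ DtO 𝒯 H | f ⟨x, hxH⟩ = y p}
        (d - (missingLabels (insert (x, y p) H')).card) := fun p hp =>
      (ih p hp (hHH'.trans (Set.subset_insert _ _))).mono (DtO_TRestrict_subset _ _ hxH _ _ _)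
    by_cases hsplit : ∃ p ∈ H', ∃ q ∈ H', y p ≠ y q
    · obtain ⟨p, hp, q, hq, hpq⟩ := hsplit
      have card_le : ∀ r, (missingLabels (insert (x, y r) H')).card ≤ (missingLabels H').card :=
        fun r => Finset.card_le_card (missingLabels_anti (Set.subset_insert _ _))
      have := card_le p
      have := card_le q
      exact (LShat.node _ (d - (missingLabels H').card) ⟨x, hxH⟩ _ _ hpq
        ((branch p hp).of_le (by omega)) ((branch q hq).of_le (by omega))).of_le (by omega)
    · push Not at hsplit
      obtain ⟨p, hp⟩ := hH.mono hHH'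
      have hmiss : y p ∈ missingLabels H' := mem_missingLabels.2 fun x' hx' =>
        hne _ hx' (hsplit _ hx' p hp)
      have := card_missingLabels_insert_lt hmiss x
      exact ((branch p hp).mono (Set.sep_subset _ _)).of_le (by omega)

theorem Ldim_DtO_ge_DFFdim_sub_general {X Y : Type} [Fintype Y] (Φ : Set (X → Bool))
    (𝒯 : Set (Teacher X Y Φ)) (H : Set (X × Y)) (hH : H.Nonempty) :
    DFFdim Φ 𝒯 H -
        ((Finset.univ.filter fun y : Y => ∀ x : X, (x, y) ∉ H).card : ℕ∞) ≤
      Ldim (DtO 𝒯 H) := by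
  change DFFdim Φ 𝒯 H - ((missingLabels H).card : ℕ∞) ≤ _
  rw [tsub_le_iff_right]
  refine sSup_le ?_
  rintro _ ⟨n, rfl, hn⟩
  calc (n : ℕ∞) ≤ ((n - (missingLabels H).card : ℕ) : ℕ∞) + (missingLabels H).card := by
        exact_mod_cast le_tsub_add
    _ ≤ Ldim (DtO 𝒯 H) + (missingLabels H).card := by
        gcongr
        exact (hn.lShat_DtO hH subset_rfl).le_Ldim

/-- **Lemma (lower bound on the Littlestone dimension of `DtO`).** Let `𝒯`
be a teacher class over `(X, Y, Φ)` with `Y` a finite label set, let `H` be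
a nonempty history consistent with `𝒯`, and let `N` be the number of labels
of `Y` that do not appear in any pair of `H`.  Then
`Ldim(DtO(𝒯, H)) ≥ DFFdim(𝒯, H) − N`. -/
theorem Ldim_DtO_ge_DFFdim_sub {X Y : Type} [Fintype Y] (Φ : Set (X → Bool))
    (𝒯 : Set (Teacher X Y Φ)) (H : Set (X × Y)) (hH : H.Nonempty)
    (hcons : ∃ T ∈ 𝒯, ConsistentH T H) :
    DFFdim Φ 𝒯 H -
        ((Finset.univ.filter fun y : Y => ∀ x : X, (x, y) ∉ H).card : ℕ∞) ≤
      Ldim (DtO 𝒯 H) :=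
  Ldim_DtO_ge_DFFdim_sub_general Φ 𝒯 H hH
end
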